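/- arXiv:1803.00681 — 4 statements merged into one kernel-verified Lean document; each statement's English description precedes it below -/
import Mathlib

section
/- Let p : E → C be a prefibration over a factorisation category (C, L, R) such that the restriction of p over R is also a preopfibration and such that the composition of cartesian lifts covering any composite x → z → y with x → z in R and z → y in L is cartesian. Then p is a semifibration over (C, L, R). -/
open CategoryTheory CategoryTheory.Functor CategoryTheory.Limits

universe v₁ v₂ u₁ u₂

section Factorization

variable (C : Type u₁) [Category.{v₁} C]

/-- A factorisation category: a category equipped with two subcategories `L` (left class)
and `R` (right class) containing all isomorphisms, such that every morphism factors,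
uniquely up to unique isomorphism, as a map of `L` followed by a map of `R`. -/
structure FactorizationCategory where
  L : MorphismProperty C
  R : MorphismProperty C
  L_iso : ∀ {x y : C} (f : x ⟶ y), IsIso f → L f
  R_iso : ∀ {x y : C} (f : x ⟶ y), IsIso f → R f
  L_comp : ∀ {x y z : C} (f : x ⟶ y) (g : y ⟶ z), L f → L g → L (f ≫ g)
  R_comp : ∀ {x y z : C} (f : x ⟶ y) (g : y ⟶ z), R f → R g → R (f ≫ g)
  factor : ∀ {x y : C} (f : x ⟶ y), ∃ (z : C) (l : x ⟶ z) (r : z ⟶ y),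
    L l ∧ R r ∧ l ≫ r = f
  factor_unique : ∀ {x y : C} (f : x ⟶ y) {z z' : C}
    (l : x ⟶ z) (r : z ⟶ y) (l' : x ⟶ z') (r' : z' ⟶ y),
    L l → R r → L l' → R r' → l ≫ r = f → l' ≫ r' = f →
    ∃! e : z ≅ z', l ≫ e.hom = l' ∧ e.hom ≫ r' = r

variable {C}
variable {E : Type u₂} [Category.{v₂} E]

/-- A semifibration over a factorisation category `(C, L, R)`: cartesian lifts of `L`-maps,
opcartesian lifts of `R`-maps, and every morphism lying over a composite of an `R`-map
followed by an `L`-map factors as an opcartesian morphism, a fibrewise morphism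
and a cartesian morphism. -/
structure IsSemifibration (p : E ⥤ C) (FC : FactorizationCategory C) : Prop where
  cartLift : ∀ {c c' : C} (l : c ⟶ c'), FC.L l → ∀ Y : E, p.obj Y = c' →
    ∃ (X : E) (φ : X ⟶ Y), p.IsCartesian l φ
  cocartLift : ∀ {c c' : C} (r : c ⟶ c'), FC.R r → ∀ X : E, p.obj X = c →
    ∃ (Y : E) (φ : X ⟶ Y), p.IsCocartesian r φ
  fact : ∀ {X Y : E} (α : X ⟶ Y) {c : C} (r : p.obj X ⟶ c) (l : c ⟶ p.obj Y),
    FC.R r → FC.L l → p.map α = r ≫ l →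
    ∃ (X' Y' : E) (ρ : X ⟶ X') (φ : X' ⟶ Y') (lam : Y' ⟶ Y),
      p.IsCocartesian r ρ ∧ p.IsHomLift (𝟙 c) φ ∧ p.IsCartesian l lam ∧
        ρ ≫ φ ≫ lam = α

end Factorization

/-! Lift `l` cartesianly to `lam : Y' ⟶ Y`, and `r` cartesianly to `φ` over `Y'`. Cartesian is the
weak notion here (universal only among maps over the same base map), so `α` is factored through
`φ ≫ lam`, which is cartesian over `r ≫ l` by hypothesis; this leaves a map `X ⟶ Y'` over `r`,
which factors through an opcartesian lift of `r` by a fibrewise map. -/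

section CartesianComposite

variable {C : Type u₁} [Category.{v₁} C] {E : Type u₂} [Category.{v₂} E] (p : E ⥤ C)

lemma exists_isHomLift_comp_eq_of_isCartesian_comp {x z y : C} (f : x ⟶ z) (g : z ⟶ y)
    {X Z Y : E} (φ : X ⟶ Z) (ψ : Z ⟶ Y) [p.IsHomLift f φ] [p.IsCartesian (f ≫ g) (φ ≫ ψ)]
    {W : E} (α : W ⟶ Y) [p.IsHomLift (f ≫ g) α] :
    ∃ χ : W ⟶ Z, p.IsHomLift f χ ∧ χ ≫ ψ = α :=
  ⟨IsCartesian.map p (f ≫ g) (φ ≫ ψ) α ≫ φ, inferInstance,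
    by rw [Category.assoc, IsCartesian.fac]⟩

end CartesianComposite

/-- A prefibration over a factorisation category which is a preopfibration over the right
class, and for which compositions of cartesian lifts covering an R-map followed by an
L-map are cartesian, is a semifibration. -/
theorem isSemifibration_of_prefibration {C : Type u₁} [Category.{v₁} C]
    {E : Type u₂} [Category.{v₂} E] (p : E ⥤ C) (FC : FactorizationCategory C)
    (hpre : ∀ {c c' : C} (f : c ⟶ c') (Y : E), p.obj Y = c' →
      ∃ (X : E) (φ : X ⟶ Y), p.IsCartesian f φ)
    (hopre : ∀ {c c' : C} (r : c ⟶ c'), FC.R r → ∀ X : E, p.obj X = c →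
      ∃ (Y : E) (φ : X ⟶ Y), p.IsCocartesian r φ)
    (hcomp : ∀ {x z y : C} (r : x ⟶ z) (l : z ⟶ y), FC.R r → FC.L l →
      ∀ {X Z Y : E} (φ : X ⟶ Z) (ψ : Z ⟶ Y),
        p.IsCartesian r φ → p.IsCartesian l ψ → p.IsCartesian (r ≫ l) (φ ≫ ψ)) :
    IsSemifibration p FC := by
  refine ⟨fun l _ => hpre l, hopre, fun {X Y} α c r l hr hl hα => ?_⟩
  obtain ⟨Y', lam, hlam⟩ := hpre l Y rfl
  obtain ⟨X'', φ, hφ⟩ := hpre r Y' (IsHomLift.domain_eq p l lam)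
  obtain ⟨X', ρ, hρ⟩ := hopre r hr X rfl
  have hcart : p.IsCartesian (r ≫ l) (φ ≫ lam) := hcomp r l hr hl φ lam hφ hlam
  have hαlift : p.IsHomLift (r ≫ l) α := hα ▸ IsHomLift.map α
  obtain ⟨χ, hχ, rfl⟩ := exists_isHomLift_comp_eq_of_isCartesian_comp p r l φ lam α
  exact ⟨X', Y', ρ, IsCocartesian.map p r ρ χ, lam, hρ, inferInstance, hlam,
    by rw [← Category.assoc, IsCocartesian.fac]⟩
end

section
/- Let (C, L, R) be a factorisation category and E → C a functor that is either a Grothendieck fibration over C which is a preopfibration over R, or a Grothendieck opfibration over C which is a prefibration over L. Then E → C is a semifibration over (C, L, R). -/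
open CategoryTheory CategoryTheory.Functor CategoryTheory.Limits

universe v₁ v₂ u₁ u₂

section Fibrations

variable {C : Type u₁} [Category.{v₁} C] {E : Type u₂} [Category.{v₂} E]

/-- A Grothendieck prefibration: every morphism of the base admits a (weakly) cartesian
lift with prescribed codomain. -/
def IsPrefibration (p : E ⥤ C) : Prop :=
  ∀ {c c' : C} (f : c ⟶ c') (Y : E), p.obj Y = c' → ∃ (X : E) (φ : X ⟶ Y), p.IsCartesian f φ

/-- A Grothendieck preopfibration: every morphism of the base admits a (weakly) opcartesian
lift with prescribed domain. -/
def IsPreopfibration (p : E ⥤ C) : Prop :=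
  ∀ {c c' : C} (f : c ⟶ c') (X : E), p.obj X = c → ∃ (Y : E) (φ : X ⟶ Y), p.IsCocartesian f φ

/-- A Grothendieck opfibration: every morphism of the base admits a strongly opcartesian
lift with prescribed domain. -/
def IsOpfibration (p : E ⥤ C) : Prop :=
  ∀ {c c' : C} (f : c ⟶ c') (X : E), p.obj X = c →
    ∃ (Y : E) (φ : X ⟶ Y), p.IsStronglyCocartesian f φ

/-- A functor has discrete fibres if every morphism in a fibre is an identity. -/
def HasDiscreteFibers (p : E ⥤ C) : Prop :=
  ∀ (c : C) (X Y : Fiber p c) (f : X ⟶ Y), ∃ h : X = Y, f = eqToHom h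

end Fibrations

/-!
Let `α` lie over `r ≫ l`, take an opcartesian lift `ρ` of `r` at its source and a cartesian lift
`lam` of `l` at its target. If `lam` is strongly cartesian, `α` factors through `lam` by a map
over `r`, which factors through `ρ` by a map over `𝟙`; dually if `ρ` is strongly opcartesian.
In a fibration every cartesian morphism is strongly cartesian, and an opfibration provides
strongly opcartesian lifts.
-/

namespace CategoryTheory.Functor

variable {C : Type u₁} [Category.{v₁} C] {E : Type u₂} [Category.{v₂} E] (p : E ⥤ C)

theorem exists_isHomLift_id_of_isCocartesian_of_isStronglyCartesian {a b c : C}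
    (r : a ⟶ b) (l : b ⟶ c) {X X' Y' Y : E} (ρ : X ⟶ X') (lam : Y' ⟶ Y)
    [p.IsCocartesian r ρ] [p.IsStronglyCartesian l lam] (α : X ⟶ Y) [p.IsHomLift (r ≫ l) α] :
    ∃ φ : X' ⟶ Y', p.IsHomLift (𝟙 b) φ ∧ ρ ≫ φ ≫ lam = α :=
  ⟨IsCocartesian.map p r ρ (IsStronglyCartesian.map p l lam (g := r) rfl α), inferInstance, by
    rw [← Category.assoc, IsCocartesian.fac, IsStronglyCartesian.fac]⟩

theorem exists_isHomLift_id_of_isStronglyCocartesian_of_isCartesian {a b c : C}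
    (r : a ⟶ b) (l : b ⟶ c) {X X' Y' Y : E} (ρ : X ⟶ X') (lam : Y' ⟶ Y)
    [p.IsStronglyCocartesian r ρ] [p.IsCartesian l lam] (α : X ⟶ Y) [p.IsHomLift (r ≫ l) α] :
    ∃ φ : X' ⟶ Y', p.IsHomLift (𝟙 b) φ ∧ ρ ≫ φ ≫ lam = α :=
  ⟨IsCartesian.map p l lam (IsStronglyCocartesian.map p r ρ (g := l) rfl α), inferInstance, by
    rw [IsCartesian.fac, IsStronglyCocartesian.fac]⟩

theorem isSemifibration_of_isFibered [p.IsFibered] (FC : FactorizationCategory C)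
    (hR : ∀ {c c' : C} (r : c ⟶ c'), FC.R r → ∀ X : E, p.obj X = c →
      ∃ (Y : E) (φ : X ⟶ Y), p.IsCocartesian r φ) :
    IsSemifibration p FC where
  cartLift l _ _ hY := IsPreFibered.exists_isCartesian p hY l
  cocartLift := hR
  fact {X Y} α _ r l hr _ hα := by
    have : p.IsHomLift (r ≫ l) α := hα ▸ inferInstance
    obtain ⟨X', ρ, hρ⟩ := hR r hr X rfl
    obtain ⟨Y', lam, hlam⟩ := IsPreFibered.exists_isCartesian p rfl l
    obtain ⟨φ, hφ, hfac⟩ :=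
      exists_isHomLift_id_of_isCocartesian_of_isStronglyCartesian p r l ρ lam α
    exact ⟨X', Y', ρ, φ, lam, hρ, hφ, hlam, hfac⟩

theorem isSemifibration_of_isOpfibration (hp : IsOpfibration p) (FC : FactorizationCategory C)
    (hL : ∀ {c c' : C} (l : c ⟶ c'), FC.L l → ∀ Y : E, p.obj Y = c' →
      ∃ (X : E) (φ : X ⟶ Y), p.IsCartesian l φ) :
    IsSemifibration p FC where
  cartLift := hL
  cocartLift r _ X hX := by
    obtain ⟨Y, φ, _⟩ := hp r X hX
    exact ⟨Y, φ, inferInstance⟩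
  fact {X Y} α _ r l _ hl hα := by
    have : p.IsHomLift (r ≫ l) α := hα ▸ inferInstance
    obtain ⟨X', ρ, _⟩ := hp r X rfl
    obtain ⟨Y', lam, hlam⟩ := hL l hl Y rfl
    obtain ⟨φ, hφ, hfac⟩ :=
      exists_isHomLift_id_of_isStronglyCocartesian_of_isCartesian p r l ρ lam α
    exact ⟨X', Y', ρ, φ, lam, inferInstance, hφ, hlam, hfac⟩

end CategoryTheory.Functor

/-- A Grothendieck fibration which is a preopfibration over the right class, or a
Grothendieck opfibration which is a prefibration over the left class, is a
semifibration over the factorisation category. -/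
theorem isSemifibration_of_fibration_or_opfibration {C : Type u₁} [Category.{v₁} C]
    {E : Type u₂} [Category.{v₂} E] (p : E ⥤ C) (FC : FactorizationCategory C)
    (h : (p.IsFibered ∧ ∀ {c c' : C} (r : c ⟶ c'), FC.R r → ∀ X : E, p.obj X = c →
            ∃ (Y : E) (φ : X ⟶ Y), p.IsCocartesian r φ) ∨
         (IsOpfibration p ∧ ∀ {c c' : C} (l : c ⟶ c'), FC.L l → ∀ Y : E, p.obj Y = c' →
            ∃ (X : E) (φ : X ⟶ Y), p.IsCartesian l φ)) :
    IsSemifibration p FC := by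
  rcases h with ⟨_, hR⟩ | ⟨hp, hL⟩
  · exact isSemifibration_of_isFibered p FC hR
  · exact isSemifibration_of_isOpfibration p hp FC hL
end

section
/- Let E → C be a prefibration with cocomplete fibres (each E(c) admits small colimits). Then the category of sections Sect(C, E) is cocomplete, and colimits are calculated fibrewise: (colim_I S_•)(c) = colim_I S_i(c) in E(c). -/
open CategoryTheory CategoryTheory.Functor CategoryTheory.Limits

universe w w' v₁ v₂ v₃ v₄ u₁ u₂ u₃ u₄

section Sections

variable {C : Type u₁} [Category.{v₁} C] {E : Type u₂} [Category.{v₂} E]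
  {D : Type u₃} [Category.{v₃} D]

/-- A section of `E → C` relative to a functor `F : D ⥤ C`, i.e. a section of the
pullback of `p : E ⥤ C` along `F`: a functor `D ⥤ E` lifting `F` strictly. -/
structure SectOver (F : D ⥤ C) (p : E ⥤ C) : Type max u₂ u₃ v₂ v₃ where
  F' : D ⥤ E
  over' : F' ⋙ p = F

variable {F : D ⥤ C} {p : E ⥤ C}

lemma SectOver.obj_over (S : SectOver F p) (d : D) : p.obj (S.F'.obj d) = F.obj d :=
  Functor.congr_obj S.over' d

/-- Morphisms of sections are natural transformations all of whose components
are fibrewise (project to identities). -/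
instance SectOver.category : Category (SectOver F p) where
  Hom S T := { α : S.F' ⟶ T.F' // ∀ d : D, p.IsHomLift (𝟙 (F.obj d)) (α.app d) }
  id S := ⟨𝟙 S.F', fun d => IsHomLift.id (S.obj_over d)⟩
  comp {S T U} α β := ⟨α.1 ≫ β.1, fun d => by
    haveI := α.2 d; haveI := β.2 d
    have h : p.IsHomLift (𝟙 (F.obj d) ≫ 𝟙 (F.obj d)) (α.1.app d ≫ β.1.app d) := inferInstance
    simpa using h⟩
  id_comp α := Subtype.ext (Category.id_comp α.1)
  comp_id α := Subtype.ext (Category.comp_id α.1)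
  assoc α β γ := Subtype.ext (Category.assoc α.1 β.1 γ.1)

/-- The category of sections of `p : E ⥤ C`. -/
abbrev Sect (p : E ⥤ C) := SectOver (𝟭 C) p

/-- Evaluation of sections at an object of the base, taking values in the fibre. -/
@[simps] def SectOver.ev (p : E ⥤ C) (F : D ⥤ C) (d : D) :
    SectOver F p ⥤ Fiber p (F.obj d) where
  obj S := ⟨S.F'.obj d, S.obj_over d⟩
  map α := ⟨α.1.app d, α.2 d⟩
  map_id _ := rfl
  map_comp _ _ := rfl

/-- Restriction of sections along a functor between the index categories. -/
def SectOver.restrict {D' : Type u₄} [Category.{v₄} D'] (G : D' ⥤ D) {F : D ⥤ C}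
    {F₀ : D' ⥤ C} (hF : G ⋙ F = F₀) (p : E ⥤ C) : SectOver F p ⥤ SectOver F₀ p where
  obj S := ⟨G ⋙ S.F', by rw [Functor.assoc, S.over', hF]⟩
  map {S T} α := ⟨whiskerLeft G α.1, fun d => by
    have h := α.2 (G.obj d)
    have he : F.obj (G.obj d) = F₀.obj d := Functor.congr_obj hF d
    exact he ▸ h⟩
  map_id _ := Subtype.ext (by aesop_cat)
  map_comp _ _ := Subtype.ext (by aesop_cat)

end Sections

section FibColim

variable {C : Type u₁} [Category.{v₁} C] {E : Type u₂} [Category.{v₂} E] (p : E ⥤ C)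

lemma Sect.map_isHomLift (S : Sect p) {c c' : C} (f : c ⟶ c') :
    p.IsHomLift f (S.F'.map f) := by
  apply IsHomLift.of_fac' p f (S.F'.map f) (S.obj_over c) (S.obj_over c')
  have := Functor.congr_hom S.over' f
  simpa using this

variable (hc : ∀ c : C, HasColimitsOfSize.{v₂, v₂} (Fiber p c))
  {I : Type v₂} [Category.{v₂} I] (K : I ⥤ Sect p)

/-- The diagram in the fibre over `c` obtained by evaluating `K` at `c`. -/
abbrev fibDiag (c : C) : I ⥤ Fiber p c := K ⋙ SectOver.ev p (𝟭 C) c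

/-- The fibrewise colimit, as an object of the fibre. -/
noncomputable def colimFib (c : C) : Fiber p c := by
  haveI := hc c; exact colimit (fibDiag p K c)

/-- The underlying object of the fibrewise colimit. -/
noncomputable def Tobj (c : C) : E := (colimFib p hc K c).1

lemma Tobj_over (c : C) : p.obj (Tobj p hc K c) = c := (colimFib p hc K c).2

/-- Colimit injection, in the fibre. -/
noncomputable def ιFib (c : C) (i : I) : (fibDiag p K c).obj i ⟶ colimFib p hc K c := by
  haveI := hc c; exact colimit.ι (fibDiag p K c) i

/-- Colimit injection, in the total category. -/
noncomputable def ιT (c : C) (i : I) : (K.obj i).F'.obj c ⟶ Tobj p hc K c :=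
  (ιFib p hc K c i).1

instance ιT_lift (c : C) (i : I) : p.IsHomLift (𝟙 c) (ιT p hc K c i) :=
  (ιFib p hc K c i).2

lemma ιT_nat (c : C) {i j : I} (u : i ⟶ j) :
    (K.map u).1.app c ≫ ιT p hc K c j = ιT p hc K c i := by
  haveI := hc c
  exact congrArg Subtype.val (colimit.w (fibDiag p K c) u)

/-- Uniqueness of maps out of the fibrewise colimit, within the fibre. -/
lemma Tobj_hom_ext {c : C} {Z : E} (u v : Tobj p hc K c ⟶ Z)
    [p.IsHomLift (𝟙 c) u] [p.IsHomLift (𝟙 c) v]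
    (h : ∀ i, ιT p hc K c i ≫ u = ιT p hc K c i ≫ v) : u = v := by
  haveI := hc c
  have hZ : p.obj Z = c := IsHomLift.codomain_eq p (𝟙 c) u
  let W : Fiber p c := ⟨Z, hZ⟩
  let u' : colimFib p hc K c ⟶ W := ⟨u, by assumption⟩
  let v' : colimFib p hc K c ⟶ W := ⟨v, by assumption⟩
  have h' : u' = v' := colimit.hom_ext (fun i => Subtype.ext (h i))
  exact congrArg Subtype.val h' 

/-- Uniqueness of maps out of the fibrewise colimit lying over a fixed morphism. -/
lemma Tobj_hom_ext_over (hp : IsPrefibration p) {c c' : C} (f : c ⟶ c') {Z : E}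
    (hZ : p.obj Z = c') (u v : Tobj p hc K c ⟶ Z) [p.IsHomLift f u] [p.IsHomLift f v]
    (h : ∀ i, ιT p hc K c i ≫ u = ιT p hc K c i ≫ v) : u = v := by
  obtain ⟨X, φ, hφ⟩ := hp f Z hZ
  haveI := hφ
  have hu : Functor.IsCartesian.map p f φ u ≫ φ = u := Functor.IsCartesian.fac p f φ u
  have hv : Functor.IsCartesian.map p f φ v ≫ φ = v := Functor.IsCartesian.fac p f φ v
  have key : Functor.IsCartesian.map p f φ u = Functor.IsCartesian.map p f φ v := by
    apply Tobj_hom_ext p hc K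
    intro i
    apply Functor.IsCartesian.ext p f φ
    rw [Category.assoc, Category.assoc, hu, hv, h i]
  rw [← hu, ← hv, key]

lemma Tmap_exists (hp : IsPrefibration p) {c c' : C} (f : c ⟶ c') :
    ∃ u : Tobj p hc K c ⟶ Tobj p hc K c', p.IsHomLift f u ∧
      ∀ i, ιT p hc K c i ≫ u = (K.obj i).F'.map f ≫ ιT p hc K c' i := by
  haveI := hc c
  obtain ⟨X, φ, hφ⟩ := hp f (Tobj p hc K c') (Tobj_over p hc K c')
  haveI := hφ
  have hX : p.obj X = c := IsHomLift.domain_eq p f φ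
  haveI hlift : ∀ i, p.IsHomLift f ((K.obj i).F'.map f ≫ ιT p hc K c' i) := fun i => by
    haveI := Sect.map_isHomLift p (K.obj i) f
    infer_instance
  let g : ∀ i, (K.obj i).F'.obj c ⟶ X := fun i =>
    haveI := hlift i
    Functor.IsCartesian.map p f φ ((K.obj i).F'.map f ≫ ιT p hc K c' i)
  haveI hg : ∀ i, p.IsHomLift (𝟙 c) (g i) := fun i => by
    haveI := hlift i
    exact Functor.IsCartesian.map_isHomLift p f φ _
  have hfac : ∀ i, g i ≫ φ = (K.obj i).F'.map f ≫ ιT p hc K c' i := fun i => by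
    haveI := hlift i
    exact Functor.IsCartesian.fac p f φ _
  have hcomp : ∀ {i j : I} (u : i ⟶ j), (K.map u).1.app c ≫ g j = g i := by
    intro i j u
    haveI : p.IsHomLift (𝟙 c) ((K.map u).1.app c) := (K.map u).2 c
    apply Functor.IsCartesian.ext p f φ
    rw [Category.assoc, hfac j, hfac i]
    rw [← Category.assoc, ← (K.map u).1.naturality f, Category.assoc, ιT_nat p hc K c' u]
  let cc : Cocone (fibDiag p K c) :=
    { pt := ⟨X, hX⟩
      ι := { app := fun i => ⟨g i, hg i⟩
             naturality := fun i j u => by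
               apply Subtype.ext
               show (K.map u).1.app c ≫ g j = g i ≫ 𝟙 X
               rw [Category.comp_id]; exact hcomp u } }
  refine ⟨(colimit.desc (fibDiag p K c) cc).1 ≫ φ, ?_, ?_⟩
  · haveI : p.IsHomLift (𝟙 c) ((colimit.desc (fibDiag p K c) cc).1) :=
      (colimit.desc (fibDiag p K c) cc).2
    exact @IsHomLift.comp_lift_id_left' _ _ _ _ p _ _ _ c (colimit.desc (fibDiag p K c) cc).1 this _ _ f φ _
  · intro i
    refine Eq.trans (Category.assoc _ _ _).symm ?_
    have : ιT p hc K c i ≫ (colimit.desc (fibDiag p K c) cc).1 = g i :=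
      congrArg Subtype.val (colimit.ι_desc cc i)
    exact (congrArg (· ≫ φ) this).trans (hfac i)

variable (hp : IsPrefibration p)

/-- The action of the fibrewise colimit section on morphisms. -/
noncomputable def Tmap {c c' : C} (f : c ⟶ c') : Tobj p hc K c ⟶ Tobj p hc K c' :=
  (Tmap_exists p hc K hp f).choose

instance Tmap_lift {c c' : C} (f : c ⟶ c') : p.IsHomLift f (Tmap p hc K hp f) :=
  (Tmap_exists p hc K hp f).choose_spec.1

lemma ιT_Tmap {c c' : C} (f : c ⟶ c') (i : I) :
    ιT p hc K c i ≫ Tmap p hc K hp f = (K.obj i).F'.map f ≫ ιT p hc K c' i :=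
  (Tmap_exists p hc K hp f).choose_spec.2 i

lemma Tmap_id (c : C) : Tmap p hc K hp (𝟙 c) = 𝟙 (Tobj p hc K c) := by
  haveI : p.IsHomLift (𝟙 c) (𝟙 (Tobj p hc K c)) := IsHomLift.id (Tobj_over p hc K c)
  apply Tobj_hom_ext_over p hc K hp (𝟙 c) (Tobj_over p hc K c)
  intro i
  rw [ιT_Tmap, Category.comp_id, (K.obj i).F'.map_id, Category.id_comp]

lemma Tmap_comp {c c' c'' : C} (f : c ⟶ c') (g : c' ⟶ c'') :
    Tmap p hc K hp (f ≫ g) = Tmap p hc K hp f ≫ Tmap p hc K hp g := by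
  haveI : p.IsHomLift (f ≫ g) (Tmap p hc K hp f ≫ Tmap p hc K hp g) := inferInstance
  apply Tobj_hom_ext_over p hc K hp (f ≫ g) (Tobj_over p hc K c'')
  intro i
  rw [ιT_Tmap, ← Category.assoc, ιT_Tmap, Category.assoc, ιT_Tmap, ← Category.assoc,
    ← (K.obj i).F'.map_comp]

/-- The fibrewise colimit section. -/
noncomputable def Tsect : Sect p where
  F' :=
    { obj := Tobj p hc K
      map := fun f => Tmap p hc K hp f
      map_id := fun c => Tmap_id p hc K hp c
      map_comp := fun f g => Tmap_comp p hc K hp f g }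
  over' := CategoryTheory.Functor.ext (fun c => Tobj_over p hc K c)
    (fun c c' f => by simpa using IsHomLift.fac' p f (Tmap p hc K hp f))

/-- The colimit cocone on `K` in the category of sections. -/
noncomputable def Tcocone : Cocone K where
  pt := Tsect p hc K hp
  ι :=
    { app := fun i =>
        ⟨{ app := fun c => ιT p hc K c i
           naturality := fun c c' f => (ιT_Tmap p hc K hp f i).symm },
         fun c => ιT_lift p hc K c i⟩
      naturality := fun i j u => by
        apply Subtype.ext
        apply NatTrans.ext
        funext c
        show (K.map u).1.app c ≫ ιT p hc K c j = ιT p hc K c i ≫ 𝟙 _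
        rw [Category.comp_id]
        exact ιT_nat p hc K c u }

/-- The fibre-level cocone associated to a cocone `s` over `K`, at `c : C`. -/
def Tdesccc (s : Cocone K) (c : C) : Cocone (fibDiag p K c) where
  pt := ⟨s.pt.F'.obj c, s.pt.obj_over c⟩
  ι :=
    { app := fun i => ⟨(s.ι.app i).1.app c, (s.ι.app i).2 c⟩
      naturality := fun i j u => by
        apply Subtype.ext
        show (K.map u).1.app c ≫ (s.ι.app j).1.app c = (s.ι.app i).1.app c ≫ 𝟙 _
        rw [Category.comp_id]
        exact congrArg (fun (α : K.obj i ⟶ s.pt) => α.1.app c) (s.w u) }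

/-- The component at `c` of the descended morphism to a cocone `s`. -/
noncomputable def TdescHom (s : Cocone K) (c : C) : Tobj p hc K c ⟶ s.pt.F'.obj c := by
  haveI := hc c
  exact (colimit.desc (fibDiag p K c) (Tdesccc p K s c)).1

instance TdescHom_lift (s : Cocone K) (c : C) : p.IsHomLift (𝟙 c) (TdescHom p hc K s c) := by
  haveI := hc c
  exact (colimit.desc (fibDiag p K c) (Tdesccc p K s c)).2

lemma ιT_TdescHom (s : Cocone K) (c : C) (i : I) :
    ιT p hc K c i ≫ TdescHom p hc K s c = (s.ι.app i).1.app c := by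
  haveI := hc c
  exact congrArg Subtype.val (colimit.ι_desc (Tdesccc p K s c) i)

/-- The constructed cocone is a colimit cocone. -/
noncomputable def TisColimit : IsColimit (Tcocone p hc K hp) where
  desc s :=
    ⟨{ app := fun c => TdescHom p hc K s c
       naturality := fun c c' f => by
         show Tmap p hc K hp f ≫ TdescHom p hc K s c' = TdescHom p hc K s c ≫ s.pt.F'.map f
         haveI := Sect.map_isHomLift p s.pt f
         haveI : p.IsHomLift f (Tmap p hc K hp f ≫ TdescHom p hc K s c') := inferInstance
         haveI : p.IsHomLift f (TdescHom p hc K s c ≫ s.pt.F'.map f) := inferInstance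
         apply Tobj_hom_ext_over p hc K hp f (s.pt.obj_over c')
         intro i
         rw [← Category.assoc, ιT_Tmap, Category.assoc, ιT_TdescHom, ← Category.assoc,
           ιT_TdescHom, (s.ι.app i).1.naturality f]
         rfl },
     fun c => TdescHom_lift p hc K s c⟩
  fac s i := by
    apply Subtype.ext
    apply NatTrans.ext
    funext c
    exact ιT_TdescHom p hc K s c i
  uniq s m hm := by
    apply Subtype.ext
    apply NatTrans.ext
    funext c
    haveI : p.IsHomLift (𝟙 c) (m.1.app c) := m.2 c
    refine @Tobj_hom_ext _ _ _ _ p hc _ _ K c _ (m.1.app c) _ (by assumption) _ ?_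
    intro i
    rw [ιT_TdescHom]
    exact congrArg (fun (α : K.obj i ⟶ s.pt) => α.1.app c) (hm i)

end FibColim

/-- For a prefibration with cocomplete fibres, the category of sections is cocomplete,
and colimits are calculated fibrewise (the evaluation functors to the fibres preserve
colimits). -/
theorem sect_cocomplete_of_fibrewise_cocomplete {C : Type u₁} [Category.{v₁} C]
    {E : Type u₂} [Category.{v₂} E] (p : E ⥤ C) (hp : IsPrefibration p)
    (hc : ∀ c : C, HasColimitsOfSize.{v₂, v₂} (Fiber p c)) :
    HasColimitsOfSize.{v₂, v₂} (Sect p) ∧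
      ∀ c : C, Nonempty (PreservesColimitsOfSize.{v₂, v₂} (SectOver.ev p (𝟭 C) c)) := by
  constructor
  · exact ⟨fun {I} _ => ⟨fun K => HasColimit.mk ⟨Tcocone p hc K hp, TisColimit p hc K hp⟩⟩⟩
  · intro c
    refine ⟨⟨fun {I} _ => ⟨fun {K} => ?_⟩⟩⟩
    apply preservesColimit_of_preserves_colimit_cocone (TisColimit p hc K hp)
    haveI := hc c
    refine IsColimit.ofIsoColimit (colimit.isColimit (fibDiag p K c)) (Cocones.ext (Iso.refl _) ?_)
    intro i
    apply Subtype.ext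
    show ιT p hc K c i ≫ 𝟙 _ = ιT p hc K c i
    simp
end

section
/- For a functor F : D → C injective on objects, the following are equivalent: (1) F is a closed immersion (full, faithful, injective on objects, and every morphism F(d) → c in C lifts uniquely to a morphism d → d' in D); (2) F is a faithful isofibration and for each d ∈ D the essential image of d\D in F(d)\C is a cosieve; (3) F is a fully faithful Grothendieck opfibration with discrete fibres. -/
open CategoryTheory CategoryTheory.Functor CategoryTheory.Limits

universe v₁ v₂ u₁ u₂

section ClosedImmersion

variable {C : Type u₁} [Category.{v₁} C] {D : Type u₂} [Category.{v₂} D]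

/-- A closed immersion: a full, faithful functor, injective on objects, such that every
morphism `F(d) ⟶ c` lifts uniquely to a morphism `d ⟶ d'` of `D`. -/
structure IsClosedImmersion (F : D ⥤ C) : Prop where
  full : F.Full
  faithful : F.Faithful
  obj_injective : Function.Injective F.obj
  lift_unique : ∀ {d : D} {c : C} (f : F.obj d ⟶ c),
    ∃! g : Σ d' : D, d ⟶ d', ∃ h : F.obj g.1 = c, F.map g.2 ≫ eqToHom h = f

/-- An isofibration: isomorphisms of the base lift, with prescribed codomain. -/
def IsIsofibration (F : D ⥤ C) : Prop :=
  ∀ {c c' : C} (e : c ≅ c') (Y : D) (hY : F.obj Y = c'),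
    ∃ (X : D) (e' : X ≅ Y) (hX : F.obj X = c),
      F.map e'.hom = eqToHom hX ≫ e.hom ≫ eqToHom hY.symm

/-- For each `d`, the essential image of `d \ D` in `F(d) \ C` is a cosieve:
it is closed under postcomposition. -/
def EssImageCosieve (F : D ⥤ C) : Prop :=
  ∀ (d : D) {c c' : C} (f : F.obj d ⟶ c) (h : c ⟶ c'),
    (∃ (d' : D) (g : d ⟶ d') (e : F.obj d' ≅ c), F.map g ≫ e.hom = f) →
    ∃ (d'' : D) (g' : d ⟶ d'') (e' : F.obj d'' ≅ c'), F.map g' ≫ e'.hom = f ≫ h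

end ClosedImmersion

/-!
When `F` is injective on objects, each of the three conditions amounts to: `F` is faithful and
every morphism `F d ⟶ c` lifts to a morphism out of `d`. Such lifts make `F` full (the lift of
`F d ⟶ F d'` must end at `d'`), and injectivity plus faithfulness make them unique. The cosieve
condition, applied to the identity of `F d`, realises any `f : F d ⟶ c` up to an isomorphism
`F d'' ≅ c`, which the isofibration property then straightens into an honest lift; the
opcartesian lift of `f` is a lift outright. Conversely, over a fully faithful functor every
morphism is strongly opcartesian over its image, and in a fibre of a faithful functor injective
on objects every morphism is an identity.
-/

section

variable {C : Type u₁} [Category.{v₁} C] {D : Type u₂} [Category.{v₂} D] {F : D ⥤ C}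

def LiftsMorphismsFromImage (F : D ⥤ C) : Prop :=
  ∀ {d : D} {c : C} (f : F.obj d ⟶ c),
    ∃ (d' : D) (g : d ⟶ d') (h : F.obj d' = c), F.map g ≫ eqToHom h = f

lemma LiftsMorphismsFromImage.full (hinj : Function.Injective F.obj)
    (hlift : LiftsMorphismsFromImage F) : F.Full where
  map_surjective {d d'} f := by
    obtain ⟨d'', g, h, hg⟩ := hlift f
    obtain rfl := hinj h
    exact ⟨g, by simpa using hg⟩

lemma isClosedImmersion_iff (hinj : Function.Injective F.obj) :
    IsClosedImmersion F ↔ F.Faithful ∧ LiftsMorphismsFromImage F := by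
  refine ⟨fun h => ⟨h.faithful, fun f => ?_⟩, fun ⟨hfaith, hlift⟩ => ?_⟩
  · obtain ⟨⟨d', g⟩, ⟨h, hg⟩, -⟩ := h.lift_unique f
    exact ⟨d', g, h, hg⟩
  refine ⟨hlift.full hinj, hfaith, hinj, fun f => ?_⟩
  obtain ⟨d', g, h, hg⟩ := hlift f
  refine ⟨⟨d', g⟩, ⟨h, hg⟩, ?_⟩
  rintro ⟨d₁, g₁⟩ ⟨h₁, hg₁⟩
  obtain rfl := hinj (h₁.trans h.symm)
  rw [← hg, cancel_mono] at hg₁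
  rw [show g₁ = g from F.map_injective hg₁]

lemma LiftsMorphismsFromImage.essImageCosieve (hlift : LiftsMorphismsFromImage F) :
    EssImageCosieve F := by
  intro d c c' f h _
  obtain ⟨d'', g, hd'', hg⟩ := hlift (f ≫ h)
  exact ⟨d'', g, eqToIso hd'', hg⟩

lemma LiftsMorphismsFromImage.isIsofibration [F.Full] [F.Faithful]
    (hlift : LiftsMorphismsFromImage F) : IsIsofibration F := by
  rintro c c' e Y rfl
  obtain ⟨X, -, hX, -⟩ := hlift e.inv
  exact ⟨X, F.preimageIso (eqToIso hX ≪≫ e), hX, by simp⟩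

lemma LiftsMorphismsFromImage.of_isIsofibration (hiso : IsIsofibration F)
    (hcos : EssImageCosieve F) : LiftsMorphismsFromImage F := by
  intro d c f
  obtain ⟨d'', g, e, hge⟩ := hcos d (𝟙 (F.obj d)) f ⟨d, 𝟙 d, Iso.refl _, by simp⟩
  obtain ⟨X, e', hX, he'⟩ := hiso e.symm d'' rfl
  have he'_inv : F.map e'.inv ≫ eqToHom hX = e.hom := by
    rw [← cancel_epi (F.map e'.hom), ← F.map_comp_assoc, e'.hom_inv_id, F.map_id, he']
    simp
  refine ⟨X, g ≫ e'.inv, hX, ?_⟩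
  rw [F.map_comp, Category.assoc, he'_inv, hge, Category.id_comp]

lemma isStronglyCocartesian_of_full_of_faithful [F.Full] [F.Faithful] {X Y : D} (φ : X ⟶ Y) :
    F.IsStronglyCocartesian (F.map φ) φ where
  universal_property' {Y'} g φ' _ := by
    have hφ' : F.map φ ≫ g = F.map φ' := IsHomLift.eq_of_isHomLift F _ φ'
    refine ⟨F.preimage g, ⟨by simpa using IsHomLift.map F (F.preimage g), ?_⟩, ?_⟩
    · exact F.map_injective (by simp [hφ'])
    · rintro ψ ⟨hψ, -⟩
      exact F.map_injective (by simp [← IsHomLift.eq_of_isHomLift F g ψ])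

lemma LiftsMorphismsFromImage.isOpfibration [F.Full] [F.Faithful]
    (hlift : LiftsMorphismsFromImage F) : IsOpfibration F := by
  rintro c c' f X rfl
  obtain ⟨Y, φ, rfl, hφ⟩ := hlift f
  obtain rfl : F.map φ = f := by simpa using hφ
  exact ⟨Y, φ, isStronglyCocartesian_of_full_of_faithful φ⟩

lemma IsOpfibration.liftsMorphismsFromImage (hop : IsOpfibration F) :
    LiftsMorphismsFromImage F := by
  intro d c f
  obtain ⟨Y, φ, hφ⟩ := hop f d rfl
  exact ⟨Y, φ, IsHomLift.codomain_eq F f φ, by simp [IsHomLift.fac' F f φ]⟩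

lemma hasDiscreteFibers_of_injective_of_faithful (hinj : Function.Injective F.obj)
    [F.Faithful] : HasDiscreteFibers F := by
  rintro c ⟨x, rfl⟩ ⟨y, hy⟩ f
  obtain rfl : x = y := hinj hy.symm
  have hf : F.map f.1 = F.map (𝟙 x) := by
    have := f.2
    simp [← IsHomLift.eq_of_isHomLift F (𝟙 (F.obj x)) f.1]
  exact ⟨rfl, Fiber.hom_ext (F.map_injective hf)⟩

end

/-- For a functor injective on objects, the following are equivalent:
(1) it is a closed immersion; (2) it is a faithful isofibration whose essential images of
under-categories are cosieves; (3) it is a fully faithful Grothendieck opfibration with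
discrete fibres. -/
theorem closedImmersion_tfae {C : Type u₁} [Category.{v₁} C] {D : Type u₂} [Category.{v₂} D]
    (F : D ⥤ C) (hinj : Function.Injective F.obj) :
    (IsClosedImmersion F ↔ (F.Faithful ∧ IsIsofibration F ∧ EssImageCosieve F)) ∧
    (IsClosedImmersion F ↔
      (F.Full ∧ F.Faithful ∧ IsOpfibration F ∧ HasDiscreteFibers F)) := by
  rw [isClosedImmersion_iff hinj]
  refine ⟨⟨?_, ?_⟩, ⟨?_, ?_⟩⟩
  · rintro ⟨hfaith, hlift⟩
    have := hlift.full hinj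
    exact ⟨hfaith, hlift.isIsofibration, hlift.essImageCosieve⟩
  · rintro ⟨hfaith, hiso, hcos⟩
    exact ⟨hfaith, LiftsMorphismsFromImage.of_isIsofibration hiso hcos⟩
  · rintro ⟨hfaith, hlift⟩
    have hfull := hlift.full hinj
    exact ⟨hfull, hfaith, hlift.isOpfibration, hasDiscreteFibers_of_injective_of_faithful hinj⟩
  · rintro ⟨-, hfaith, hop, -⟩
    exact ⟨hfaith, hop.liftsMorphismsFromImage⟩
end
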